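/- Let A ∈ M_n(ℂ) (with the Euclidean operator norm) and suppose there is a unit vector x ∈ ℂⁿ such that M₀(A) = ℂ·x, where M₀(A) = {y ∈ ℂⁿ : ‖Ay‖ = ‖A‖·‖y‖}. Let R be the rank-one matrix (Ax)x* (i.e. R_{ij} = (Ax)_i · conj(x_j)). Then A and R have the same outgoing neighbourhood: for every B ∈ M_n(ℂ), A ⊥ B if and only if R ⊥ B, where ⊥ is Birkhoff–James orthogonality with complex scalars. -/

import Mathlib

open scoped Matrix.Norms.L2Operator

/-- Birkhoff–James orthogonality with complex scalars. -/
def BJ {E : Type*} [Norm E] [Add E] [SMul ℂ E] (u v : E) : Prop :=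
  ∀ c : ℂ, ‖u‖ ≤ ‖u + c • v‖

/-!
For an operator `T` whose unit norm-attaining vectors are the unimodular multiples of a unit
vector `x`, `T ⊥ B` holds exactly when `⟪T x, B x⟫ = 0`. If the inner product vanishes,
Pythagoras at `x` gives `‖T + c B‖ ≥ ‖T x + c B x‖ ≥ ‖T x‖ = ‖T‖`. If not, compactness of the
unit sphere keeps `‖T y‖` uniformly below `‖T‖` wherever `re (conj ⟪T x, B x⟫ ⟪T y, B y⟫)` is
small, and elsewhere a small step from `T` towards `-conj ⟪T x, B x⟫ • B` shortens `T y`, so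
`‖T + c B‖ < ‖T‖` for a suitable `c`. When `A x ≠ 0` the rank-one `R = (A x) x*` again attains its
norm exactly on `ℂ x`, and `R x = A x`, so both orthogonality relations reduce to the same
condition `⟪A x, B x⟫ = 0`; when `A x = 0` both `A` and `R` vanish.
-/

open scoped InnerProductSpace

lemma IsCompact.exists_forall_le_lt {α β : Type*} [TopologicalSpace α] [LinearOrder β]
    [TopologicalSpace β] [ClosedIciTopology β] [NoMinOrder β] {K : Set α} (hK : IsCompact K)
    {f : α → β} (hf : ContinuousOn f K) {a : β} (h : ∀ y ∈ K, f y < a) :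
    ∃ m < a, ∀ y ∈ K, f y ≤ m := by
  rcases K.eq_empty_or_nonempty with rfl | hne
  · obtain ⟨m, hm⟩ := exists_lt a
    exact ⟨m, hm, by simp⟩
  · obtain ⟨y, hy, hmax⟩ := hK.exists_isMaxOn hne hf
    exact ⟨f y, h y hy, hmax⟩

lemma bj_of_inner_eq_zero {E : Type*} [NormedAddCommGroup E] [InnerProductSpace ℂ E] {u v : E}
    (h : ⟪u, v⟫_ℂ = 0) : BJ u v := fun c ↦ by
  have := norm_add_sq_eq_norm_sq_add_norm_sq_of_inner_eq_zero u (c • v)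
    (by rw [inner_smul_right, h, mul_zero])
  nlinarith [norm_nonneg u, norm_nonneg (u + c • v), sq_nonneg ‖c • v‖]

namespace ContinuousLinearMap

lemma opNorm_lt_of_unit_norm {𝕜 E F : Type*} [RCLike 𝕜] [NormedAddCommGroup E]
    [NormedSpace 𝕜 E] [FiniteDimensional 𝕜 E] [NormedAddCommGroup F] [NormedSpace 𝕜 F]
    {S : E →L[𝕜] F} {r : ℝ} (hr : 0 < r) (h : ∀ y, ‖y‖ = 1 → ‖S y‖ < r) : ‖S‖ < r := by
  have := FiniteDimensional.proper_rclike 𝕜 E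
  obtain ⟨m, hmr, hm⟩ := (isCompact_sphere (0 : E) 1).exists_forall_le_lt
    S.continuous.norm.continuousOn fun y hy ↦ h y (mem_sphere_zero_iff_norm.1 hy)
  refine (opNorm_le_of_unit_norm (le_max_right m 0) fun y hy ↦ ?_).trans_lt (max_lt hmr hr)
  exact (hm y (mem_sphere_zero_iff_norm.2 hy)).trans (le_max_left m 0)

lemma exists_lt_opNorm_of_isClosed {𝕜 E F : Type*} [RCLike 𝕜] [NormedAddCommGroup E]
    [NormedSpace 𝕜 E] [FiniteDimensional 𝕜 E] [NormedAddCommGroup F] [NormedSpace 𝕜 F]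
    {T : E →L[𝕜] F} {C : Set E} (hC : IsClosed C) (h : ∀ y ∈ C, ‖y‖ = 1 → ‖T y‖ ≠ ‖T‖) :
    ∃ m < ‖T‖, ∀ y ∈ C, ‖y‖ = 1 → ‖T y‖ ≤ m := by
  have := FiniteDimensional.proper_rclike 𝕜 E
  obtain ⟨m, hmT, hm⟩ := ((isCompact_sphere (0 : E) 1).inter_right hC).exists_forall_le_lt
    T.continuous.norm.continuousOn fun y ⟨hy, hyC⟩ ↦ by
      rw [mem_sphere_zero_iff_norm] at hy
      exact (T.le_opNorm_of_le hy.le |>.trans_eq (mul_one _)).lt_of_ne (h y hyC hy)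
  exact ⟨m, hmT, fun y hyC hy ↦ hm y ⟨mem_sphere_zero_iff_norm.2 hy, hyC⟩⟩

variable {E F : Type*} [NormedAddCommGroup E] [NormedSpace ℂ E]

lemma bj_of_bj_apply [NormedAddCommGroup F] [NormedSpace ℂ F] {T B : E →L[ℂ] F} {x : E}
    (hx : ‖x‖ = 1) (hTx : ‖T x‖ = ‖T‖) (h : BJ (T x) (B x)) : BJ T B := fun c ↦
  calc ‖T‖ = ‖T x‖ := hTx.symm
    _ ≤ ‖T x + c • B x‖ := h c
    _ ≤ ‖T + c • B‖ := by simpa [hx] using (T + c • B).le_opNorm x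

variable [NormedAddCommGroup F] [InnerProductSpace ℂ F]

lemma exists_norm_add_smul_lt [FiniteDimensional ℂ E] {T B : E →L[ℂ] F} (hT : 0 < ‖T‖) {a : ℂ}
    (ha : a ≠ 0) {m : ℝ} (hmT : m < ‖T‖)
    (hm : ∀ y, ‖y‖ = 1 → (starRingEnd ℂ a * ⟪T y, B y⟫_ℂ).re ≤ ‖a‖ ^ 2 / 2 → ‖T y‖ ≤ m) :
    ∃ c : ℂ, ‖T + c • B‖ < ‖T‖ := by
  have ha_pos : 0 < ‖a‖ := norm_pos_iff.2 ha
  obtain ⟨s, hs, hs_small⟩ := exists_pos_mul_lt (lt_min one_pos (sub_pos.2 hmT))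
    (‖B‖ ^ 2 + ‖a‖ * ‖B‖)
  set c : ℂ := -(s : ℂ) * starRingEnd ℂ a
  have hc : ‖c‖ = s * ‖a‖ := by simp [c, hs.le]
  refine ⟨c, opNorm_lt_of_unit_norm hT fun y hy ↦ ?_⟩
  have hTy : ‖T y‖ ≤ ‖T‖ := T.le_opNorm_of_le hy.le |>.trans_eq (mul_one _)
  have hBy : ‖B y‖ ≤ ‖B‖ := B.le_opNorm_of_le hy.le |>.trans_eq (mul_one _)
  rw [add_apply, smul_apply]
  by_cases hy_small : (starRingEnd ℂ a * ⟪T y, B y⟫_ℂ).re ≤ ‖a‖ ^ 2 / 2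
  · calc ‖T y + c • B y‖ ≤ ‖T y‖ + ‖c‖ * ‖B y‖ := norm_add_le_of_le le_rfl (norm_smul_le _ _)
      _ ≤ m + s * ‖a‖ * ‖B‖ := by rw [hc]; gcongr; exact hm y hy hy_small
      _ < ‖T‖ := by nlinarith [min_le_right 1 (‖T‖ - m), norm_nonneg B, sq_nonneg ‖B‖]
  · push Not at hy_small
    have hre : (⟪T y, c • B y⟫_ℂ).re = -s * (starRingEnd ℂ a * ⟪T y, B y⟫_ℂ).re := by
      simp [c, inner_smul_right, mul_assoc]
    have hsB : s * ‖B‖ ^ 2 < 1 := by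
      nlinarith [min_le_left 1 (‖T‖ - m), mul_nonneg ha_pos.le (norm_nonneg B)]
    have hBy2 : ‖B y‖ ^ 2 ≤ ‖B‖ ^ 2 := pow_le_pow_left₀ (norm_nonneg _) hBy 2
    have hTy2 : ‖T y‖ ^ 2 ≤ ‖T‖ ^ 2 := pow_le_pow_left₀ (norm_nonneg _) hTy 2
    refine lt_of_pow_lt_pow_left₀ 2 hT.le ?_
    calc ‖T y + c • B y‖ ^ 2
        = ‖T y‖ ^ 2 - 2 * s * (starRingEnd ℂ a * ⟪T y, B y⟫_ℂ).re
          + (s * ‖a‖) ^ 2 * ‖B y‖ ^ 2 := by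
          rw [norm_add_sq (𝕜 := ℂ), norm_smul, hc, RCLike.re_to_complex, hre]; ring
      _ < ‖T‖ ^ 2 := by
        nlinarith [mul_le_mul_of_nonneg_left hBy2 (sq_nonneg (s * ‖a‖)),
          mul_lt_mul_of_pos_left hsB (mul_pos hs (pow_pos ha_pos 2))]

lemma inner_apply_eq_zero_of_bj [FiniteDimensional ℂ E] {T B : E →L[ℂ] F} {x : E}
    (hx : ‖x‖ = 1) (hM : ∀ y, ‖y‖ = 1 → ‖T y‖ = ‖T‖ → ∃ c : ℂ, y = c • x) (h : BJ T B) :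
    ⟪T x, B x⟫_ℂ = 0 := by
  by_contra hd
  set d := ⟪T x, B x⟫_ℂ
  have hT : 0 < ‖T‖ := norm_pos_iff.2 fun hT ↦ hd (by simp [d, hT])
  set φ : E → ℝ := fun y ↦ (starRingEnd ℂ d * ⟪T y, B y⟫_ℂ).re
  have hφ_smul (c : ℂ) : φ (c • x) = ‖c‖ ^ 2 * ‖d‖ ^ 2 := by
    have : starRingEnd ℂ d * (c * (starRingEnd ℂ c * d)) = (‖c‖ ^ 2 * ‖d‖ ^ 2 : ℝ) := by
      rw [show starRingEnd ℂ d * (c * (starRingEnd ℂ c * d))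
          = (c * starRingEnd ℂ c) * (starRingEnd ℂ d * d) by ring,
        Complex.mul_conj', Complex.conj_mul']
      push_cast; ring
    simp only [φ, map_smul, inner_smul_left, inner_smul_right]
    exact (congrArg Complex.re this).trans (Complex.ofReal_re _)
  obtain ⟨m, hmT, hm⟩ := exists_lt_opNorm_of_isClosed (T := T)
    (isClosed_le (by fun_prop) continuous_const : IsClosed {y | φ y ≤ ‖d‖ ^ 2 / 2})
    fun y hyφ hy hTy ↦ by
      obtain ⟨c, rfl⟩ := hM y hy hTy
      have hc : ‖c‖ = 1 := by simpa [norm_smul, hx] using hy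
      simp only [Set.mem_ofPred_eq, hφ_smul, hc] at hyφ
      nlinarith [norm_pos_iff.2 hd]
  obtain ⟨c, hc⟩ := exists_norm_add_smul_lt hT hd hmT fun y hy hyφ ↦ hm y hyφ hy
  exact hc.not_ge (h c)

lemma bj_iff_inner_apply_eq_zero [FiniteDimensional ℂ E] {T B : E →L[ℂ] F} {x : E}
    (hx : ‖x‖ = 1) (hTx : ‖T x‖ = ‖T‖)
    (hM : ∀ y, ‖y‖ = 1 → ‖T y‖ = ‖T‖ → ∃ c : ℂ, y = c • x) :
    BJ T B ↔ ⟪T x, B x⟫_ℂ = 0 :=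
  ⟨inner_apply_eq_zero_of_bj hx hM, fun h ↦ bj_of_bj_apply hx hTx (bj_of_inner_eq_zero h)⟩

end ContinuousLinearMap

namespace InnerProductSpace

lemma bj_rankOne_iff {E F : Type*} [NormedAddCommGroup E] [InnerProductSpace ℂ E]
    [FiniteDimensional ℂ E] [NormedAddCommGroup F] [InnerProductSpace ℂ F] {u : F} {x : E}
    (hx : ‖x‖ = 1) {B : E →L[ℂ] F} : BJ (rankOne ℂ u x) B ↔ ⟪u, B x⟫_ℂ = 0 := by
  rcases eq_or_ne u 0 with rfl | hu
  · simp [BJ]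
  have hux : rankOne ℂ u x x = u := by simp [inner_self_eq_norm_sq_to_K, hx]
  conv_rhs => rw [← hux]
  refine ContinuousLinearMap.bj_iff_inner_apply_eq_zero hx (by simp [hux, hx])
    fun y hy hy_attains ↦ ?_
  simp only [rankOne_apply, norm_smul, norm_rankOne, hx, mul_one, ne_eq, norm_eq_zero, hu,
    not_false_eq_true, mul_eq_right₀] at hy_attains
  have := ((norm_inner_eq_norm_tfae ℂ x y).out 0 2).1 (by rw [hy_attains, hx, hy, one_mul])
  exact this.resolve_left (by rintro rfl; simp at hx)

end InnerProductSpace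

namespace Matrix

variable {n : Type*} [Fintype n] [DecidableEq n]

lemma bj_toEuclideanCLM_iff {A B : Matrix n n ℂ} :
    BJ (toEuclideanCLM (𝕜 := ℂ) A) (toEuclideanCLM (𝕜 := ℂ) B) ↔ BJ A B := by
  simp only [BJ, ← map_smul, ← map_add]
  rfl

lemma toEuclideanCLM_vecMulVec_star (u v : EuclideanSpace ℂ n) :
    toEuclideanCLM (𝕜 := ℂ) (vecMulVec u (star v)) = InnerProductSpace.rankOne ℂ u v := by
  apply ContinuousLinearMap.coe_injective
  rw [coe_toEuclideanCLM_eq_toEuclideanLin, ← LinearEquiv.eq_symm_apply,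
    InnerProductSpace.symm_toEuclideanLin_rankOne]

end Matrix

/-- If the set of norm-attaining vectors of `A ∈ M_n(ℂ)` is exactly the complex line `ℂ·x`
spanned by a unit vector `x`, then `A` and the rank-one matrix `R = (Ax)x*` have the same
outgoing neighbourhood: `A ⊥ B ↔ R ⊥ B` for every `B`. -/
theorem perp_eq_perp_rankOne {n : ℕ} (A : Matrix (Fin n) (Fin n) ℂ)
    (x : EuclideanSpace ℂ (Fin n)) (hx : ‖x‖ = 1)
    (hM : {y : EuclideanSpace ℂ (Fin n) | ‖Matrix.toEuclideanLin A y‖ = ‖A‖ * ‖y‖} =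
      {y : EuclideanSpace ℂ (Fin n) | ∃ c : ℂ, y = c • x})
    (R : Matrix (Fin n) (Fin n) ℂ)
    (hR : R = Matrix.vecMulVec (fun i => Matrix.toEuclideanLin A x i)
      (fun j => starRingEnd ℂ (x j))) :
    ∀ B : Matrix (Fin n) (Fin n) ℂ, BJ A B ↔ BJ R B := by
  intro B
  set T := Matrix.toEuclideanCLM (𝕜 := ℂ) A
  have hM' (y) : ‖T y‖ = ‖T‖ * ‖y‖ ↔ ∃ c : ℂ, y = c • x := Set.ext_iff.1 hM y
  have hTx : ‖T x‖ = ‖T‖ := by simpa [hx] using (hM' x).2 ⟨1, (one_smul ℂ x).symm⟩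
  have hRT : Matrix.toEuclideanCLM (𝕜 := ℂ) R = InnerProductSpace.rankOne ℂ (T x) x :=
    hR ▸ Matrix.toEuclideanCLM_vecMulVec_star (T x) x
  rw [← Matrix.bj_toEuclideanCLM_iff, ← Matrix.bj_toEuclideanCLM_iff, hRT,
    InnerProductSpace.bj_rankOne_iff hx,
    ContinuousLinearMap.bj_iff_inner_apply_eq_zero hx hTx fun y hy ↦ by simpa [hy] using (hM' y).1]
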